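/- Let h ≥ 1 be an integer and a a real number with |a| ≤ √2. Then lim_{N→∞} Σ_{0 ≤ k ≤ ⌊N/2⌋} binom(N,2k) a^{2k} (-1)^k (h)_k / (N+1)^{h+k} = 0, where (h)_k is the rising factorial. -/

import Mathlib

open Filter

/-- Rising factorial `h (h+1) ⋯ (h+k-1)`. -/
def rising (h k : ℕ) : ℕ := ∏ i ∈ Finset.range k, (h + i)

/-!
Write `h = m + 1`. Since `(m + k)! / (N + 1) ^ (m + k + 1) = ∫₀^∞ t ^ (m + k) e^{-(N+1)t} dt` and
`(m + k)! = m! · rising (m + 1) k`, the binomial sum collapses to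
`(1 / m!) ∫₀^∞ t ^ m e^{-t} Re (w(t) ^ N) dt` with `w(t) = (1 + i a √t) e^{-t}`.
For `a² ≤ 2` and `t > 0` we have `|w(t)|² = (1 + a² t) e^{-2t} ≤ (1 + 2t) e^{-2t} < 1`, so the
integrand tends to `0` pointwise and is dominated by `t ^ m e^{-t}`.
-/

open MeasureTheory Set Complex
open scoped Nat Topology

theorem Finset.sum_range_two_mul_of_odd_eq_zero {M : Type*} [AddCommMonoid M] {f : ℕ → M}
    (hf : ∀ k, f (2 * k + 1) = 0) (N : ℕ) :
    ∑ k ∈ range (N / 2 + 1), f (2 * k) = ∑ j ∈ range (N + 1), f j := by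
  rw [← sum_image (fun _ _ _ _ h => by omega)]
  refine sum_subset (fun j hj => ?_) (fun j hj hj' => ?_)
  · obtain ⟨k, hk, rfl⟩ := mem_image.mp hj
    simp only [mem_range] at hk ⊢
    omega
  · obtain ⟨k, rfl | rfl⟩ := Nat.even_or_odd' j
    · exact absurd (mem_image.mpr ⟨k, by simp only [mem_range] at hj ⊢; omega, rfl⟩) hj'
    · exact hf k

theorem Complex.re_one_add_mul_I_pow (s : ℝ) (N : ℕ) :
    ((1 + s * I) ^ N).re =
      ∑ k ∈ Finset.range (N / 2 + 1), (N.choose (2 * k) : ℝ) * (-1) ^ k * s ^ (2 * k) := by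
  have hsq : (s * I) ^ 2 = ((-s ^ 2 : ℝ) : ℂ) := by push_cast; rw [mul_pow, I_sq]; ring
  rw [add_comm, add_pow, re_sum, ← Finset.sum_range_two_mul_of_odd_eq_zero]
  · refine Finset.sum_congr rfl fun k _ => ?_
    rw [pow_mul, hsq, one_pow, mul_one, ← ofReal_pow, ← ofReal_natCast, ← ofReal_mul, ofReal_re,
      neg_pow, pow_mul]
    ring
  · intro k
    rw [pow_succ, pow_mul, hsq, one_pow, mul_one, ← ofReal_pow, ← ofReal_natCast]
    simp [-ofReal_pow]

theorem Real.integral_pow_mul_exp_neg_mul_Ioi (n : ℕ) {r : ℝ} (hr : 0 < r) :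
    ∫ t in Ioi (0 : ℝ), t ^ n * Real.exp (-(r * t)) = n ! / r ^ (n + 1) := by
  have h := Real.integral_rpow_mul_exp_neg_mul_Ioi (a := n + 1) (by positivity) hr
  rw [add_sub_cancel_right, Real.Gamma_nat_eq_factorial] at h
  simp_rw [Real.rpow_natCast] at h
  rw [h, ← Nat.cast_add_one, Real.rpow_natCast, one_div_pow, one_div_mul_eq_div]

theorem Real.integrableOn_pow_mul_exp_neg_mul_Ioi (n : ℕ) {r : ℝ} (hr : 0 < r) :
    IntegrableOn (fun t : ℝ => t ^ n * Real.exp (-(r * t))) (Ioi 0) := by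
  simpa using integrableOn_rpow_mul_exp_neg_mul_rpow (s := n) (p := 1)
    (neg_one_lt_zero.trans_le n.cast_nonneg) one_pos hr

theorem tendsto_integral_mul_re_pow_of_norm_lt_one {α : Type*} [MeasurableSpace α]
    {μ : Measure α} {g : α → ℝ} {w : α → ℂ} (hg : Integrable g μ)
    (hw : AEStronglyMeasurable w μ) (hw1 : ∀ᵐ x ∂μ, ‖w x‖ < 1) :
    Tendsto (fun N : ℕ => ∫ x, g x * (w x ^ N).re ∂μ) atTop (𝓝 0) := by
  have hbound : ∀ N : ℕ, ∀ᵐ x ∂μ, ‖g x * (w x ^ N).re‖ ≤ ‖g x‖ := fun N => by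
    filter_upwards [hw1] with x hx
    rw [norm_mul]
    refine mul_le_of_le_one_right (norm_nonneg _) ?_
    calc ‖(w x ^ N).re‖ ≤ ‖w x ^ N‖ := abs_re_le_norm _
      _ = ‖w x‖ ^ N := norm_pow _ _
      _ ≤ 1 := pow_le_one₀ (norm_nonneg _) hx.le
  have hlim : ∀ᵐ x ∂μ, Tendsto (fun N : ℕ => g x * (w x ^ N).re) atTop (𝓝 0) := by
    filter_upwards [hw1] with x hx
    simpa using ((continuous_re.tendsto 0).comp
      (tendsto_pow_atTop_nhds_zero_of_norm_lt_one hx)).const_mul (g x)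
  simpa using tendsto_integral_of_dominated_convergence _
    (fun N => hg.aestronglyMeasurable.mul (continuous_re.comp_aestronglyMeasurable (hw.pow N)))
    hg.norm hbound hlim

noncomputable def dampedBase (a t : ℝ) : ℂ := (1 + (a * √t : ℝ) * I) * Real.exp (-t)

theorem continuous_dampedBase (a : ℝ) : Continuous (dampedBase a) := by
  unfold dampedBase
  fun_prop

theorem norm_dampedBase_lt_one {a t : ℝ} (ha : a ^ 2 ≤ 2) (ht : 0 < t) :
    ‖dampedBase a t‖ < 1 := by
  have hsq : 1 + (a * √t) ^ 2 < Real.exp t ^ 2 := by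
    rw [mul_pow, Real.sq_sqrt ht.le, sq (Real.exp t), ← Real.exp_add]
    nlinarith [Real.add_one_lt_exp (show t + t ≠ 0 by positivity)]
  rw [dampedBase, norm_mul, ← ofReal_one, norm_add_mul_I, norm_real, Real.norm_of_nonneg
    (Real.exp_pos _).le, Real.exp_neg, ← div_eq_mul_inv, div_lt_one (Real.exp_pos t), one_pow]
  exact (Real.sqrt_lt' (Real.exp_pos t)).mpr hsq

theorem mul_re_dampedBase_pow (m N : ℕ) (a : ℝ) {t : ℝ} (ht : 0 ≤ t) :
    t ^ m * Real.exp (-t) * (dampedBase a t ^ N).re =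
      ∑ k ∈ Finset.range (N / 2 + 1), (N.choose (2 * k) : ℝ) * a ^ (2 * k) * (-1) ^ k *
        (t ^ (m + k) * Real.exp (-((N + 1) * t))) := by
  have hexp : Real.exp (-t) * Real.exp (-t) ^ N = Real.exp (-((N + 1) * t)) := by
    rw [← Real.exp_nat_mul, ← Real.exp_add]; ring_nf
  rw [dampedBase, mul_pow, ← ofReal_pow, re_mul_ofReal, re_one_add_mul_I_pow, Finset.sum_mul,
    Finset.mul_sum]
  refine Finset.sum_congr rfl fun k _ => ?_
  rw [mul_pow, pow_mul (√t), Real.sq_sqrt ht, pow_add, ← hexp]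
  ring

theorem sum_rising_div_eq_integral (m N : ℕ) (a : ℝ) :
    ∑ k ∈ Finset.range (N / 2 + 1),
        (N.choose (2 * k) : ℝ) * a ^ (2 * k) * (-1) ^ k * (rising (m + 1) k : ℝ) /
          ((N : ℝ) + 1) ^ (m + 1 + k) =
      (m ! : ℝ)⁻¹ * ∫ t in Ioi (0 : ℝ), t ^ m * Real.exp (-t) * (dampedBase a t ^ N).re := by
  have hN : (0 : ℝ) < N + 1 := by positivity
  rw [setIntegral_congr_fun measurableSet_Ioi fun t ht => mul_re_dampedBase_pow m N a ht.le,
    integral_finsetSum _ fun k _ =>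
      (Real.integrableOn_pow_mul_exp_neg_mul_Ioi (m + k) hN).const_mul _,
    Finset.mul_sum]
  refine Finset.sum_congr rfl fun k _ => ?_
  have hfact : ((m + k) ! : ℝ) = m ! * rising (m + 1) k := by
    rw [rising, ← Nat.ascFactorial_eq_prod_range]
    exact_mod_cast (Nat.factorial_mul_ascFactorial m k).symm
  rw [integral_const_mul, Real.integral_pow_mul_exp_neg_mul_Ioi _ hN, hfact,
    show m + 1 + k = m + k + 1 by ring]
  field_simp

theorem stmt_5 (h : ℕ) (hh : 1 ≤ h) (a : ℝ) (ha : |a| ≤ Real.sqrt 2) :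
    Tendsto (fun N : ℕ =>
        ∑ k ∈ Finset.range (N / 2 + 1),
          (N.choose (2 * k) : ℝ) * a ^ (2 * k) * (-1) ^ k * (rising h k : ℝ) /
            ((N : ℝ) + 1) ^ (h + k))
      atTop (nhds 0) := by
  obtain ⟨m, rfl⟩ := Nat.exists_eq_add_of_le' hh
  have ha2 : a ^ 2 ≤ 2 := by
    simpa [sq_abs] using pow_le_pow_left₀ (abs_nonneg a) ha 2
  have hlim : Tendsto (fun N : ℕ =>
      ∫ t in Ioi (0 : ℝ), t ^ m * Real.exp (-t) * (dampedBase a t ^ N).re) atTop (𝓝 0) :=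
    tendsto_integral_mul_re_pow_of_norm_lt_one
      (by simpa using (Real.integrableOn_pow_mul_exp_neg_mul_Ioi m one_pos).integrable)
      (continuous_dampedBase a).aestronglyMeasurable
      ((ae_restrict_mem measurableSet_Ioi).mono fun t ht => norm_dampedBase_lt_one ha2 ht)
  simp_rw [sum_rising_div_eq_integral]
  simpa using hlim.const_mul (m ! : ℝ)⁻¹
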